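/- Let n ≤ 4 and let B = [b_1,…,b_n] be an SR-CVP reduced basis of a full-rank lattice Λ(B) in ℝ^n. Then the product of the basis lengths satisfies Π_{i=1}^n ‖b_i‖ ≤ (4/(5−n))^{n/2} · λ_n(B)^n. -/

import Mathlib

open Finset

noncomputable section

/-- `ℝ^n` with the Euclidean norm. -/
abbrev Euc (n : ℕ) := EuclideanSpace ℝ (Fin n)

/-- The lattice generated by the columns `B 1, …, B n`. -/
def lattice {n : ℕ} (B : Fin n → Euc n) : Set (Euc n) :=
  {v | ∃ c : Fin n → ℤ, v = ∑ i, (c i : ℝ) • B i}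

/-- The sublattice generated by all the columns of `B` except the `i`-th one. -/
def subLattice {n : ℕ} (B : Fin n → Euc n) (i : Fin n) : Set (Euc n) :=
  {v | ∃ c : Fin n → ℤ, c i = 0 ∧ v = ∑ j, (c j : ℝ) • B j}

/-- The `k`-th successive minimum `λ_k(B)` of the lattice generated by `B`. -/
def succMin {n : ℕ} (B : Fin n → Euc n) (k : ℕ) : ℝ :=
  sInf {r : ℝ | ∃ v : Fin k → Euc n, (∀ j, v j ∈ lattice B) ∧
    LinearIndependent ℝ v ∧ ∀ j, ‖v j‖ ≤ r}

/-- `B` is SR-CVP reduced if no vector of the sublattice generated by the other basis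
vectors can shorten a basis vector. -/
def SRCVPReduced {n : ℕ} (B : Fin n → Euc n) : Prop :=
  ∀ i : Fin n, ∀ s ∈ subLattice B i, ‖B i‖ ≤ ‖B i - s‖

/-!
Let `b = B i₀` be a longest basis vector, `K` the span of the other basis vectors and `P` the
orthogonal projection onto `K`. Babai's nearest-plane rounding finds `s` in the sublattice of the
other basis vectors with `‖P b - s‖² ≤ ¼ ∑_{k ≠ i₀} ‖B k‖² ≤ (n - 1)/4 · ‖b‖²`, and SR-CVP
reducedness `‖b‖ ≤ ‖b - s‖` transfers this bound to `‖P b‖²`. Hence the component of `b`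
orthogonal to `K` has squared length at least `(5 - n)/4 · ‖b‖²`. Among any `n` independent
lattice vectors one lies outside `K`; its coefficient on `b` is a nonzero integer, so it is at
least as long as that orthogonal component. So `λ_n ≥ √((5 - n)/4) · ‖B i‖` for every `i`.
-/

section NearestPlane

variable {E : Type*} [NormedAddCommGroup E] [InnerProductSpace ℝ E]

theorem Submodule.norm_sub_sq_eq_of_mem (K : Submodule ℝ E) [K.HasOrthogonalProjection]
    (x : E) {s : E} (hs : s ∈ K) :
    ‖x - s‖ ^ 2 = ‖K.starProjection x - s‖ ^ 2 + ‖Kᗮ.starProjection x‖ ^ 2 := by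
  rw [K.norm_sq_eq_add_norm_sq_starProjection (x - s), map_sub, map_sub,
    K.starProjection_eq_self_iff.mpr hs, K.starProjection_orthogonal_apply_eq_zero hs, sub_zero]

/-- Babai's nearest-plane bound: round the coefficient of the new vector, then recurse on the
projection onto the span of the others. -/
theorem exists_norm_sub_sum_int_smul_sq_le {ι : Type*} (c : ι → E) (s : Finset ι) {t : E}
    (ht : t ∈ Submodule.span ℝ (c '' s)) :
    ∃ z : ι → ℤ, ‖t - ∑ k ∈ s, (z k : ℝ) • c k‖ ^ 2 ≤ (∑ k ∈ s, ‖c k‖ ^ 2) / 4 := by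
  classical
  induction s using Finset.induction_on generalizing t with
  | empty => simp_all
  | insert a s ha ih =>
    rw [coe_insert, Set.image_insert_eq, Submodule.mem_span_insert] at ht
    obtain ⟨α, k, hk, rfl⟩ := ht
    set K := Submodule.span ℝ (c '' s)
    have : FiniteDimensional ℝ K := FiniteDimensional.span_of_finite ℝ (s.finite_toSet.image c)
    set r := round α
    set t := α • c a + k - (r : ℝ) • c a
    obtain ⟨z, hz⟩ := ih (K.starProjection_apply_mem t)
    have hsum : ∑ j ∈ insert a s, ((Function.update z a r j : ℤ) : ℝ) • c j =
        (r : ℝ) • c a + ∑ j ∈ s, (z j : ℝ) • c j := by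
      rw [sum_insert ha, Function.update_self]
      congr 1
      exact sum_congr rfl fun j hj => by
        rw [Function.update_of_ne (ne_of_mem_of_not_mem hj ha)]
    have horth : Kᗮ.starProjection t = (α - r) • Kᗮ.starProjection (c a) := by
      simp only [t, map_sub, map_add, map_smul, K.starProjection_orthogonal_apply_eq_zero hk,
        sub_smul]
      abel
    have hround : ‖Kᗮ.starProjection t‖ ^ 2 ≤ ‖c a‖ ^ 2 / 4 := by
      rw [horth, norm_smul, Real.norm_eq_abs, mul_pow]
      calc |α - r| ^ 2 * ‖Kᗮ.starProjection (c a)‖ ^ 2 ≤ (1 / 2) ^ 2 * ‖c a‖ ^ 2 := by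
            gcongr
            exacts [abs_sub_round α, Kᗮ.norm_starProjection_apply_le (c a)]
        _ = ‖c a‖ ^ 2 / 4 := by ring
    refine ⟨Function.update z a r, ?_⟩
    rw [hsum, sum_insert ha, ← sub_sub, K.norm_sub_sq_eq_of_mem t (K.sum_mem fun j hj =>
      K.smul_mem _ (Submodule.subset_span (Set.mem_image_of_mem c hj)))]
    linarith

end NearestPlane

section Lattice

variable {n : ℕ} {B : Fin n → Euc n}

abbrev otherSpan (B : Fin n → Euc n) (i : Fin n) : Submodule ℝ (Euc n) :=
  Submodule.span ℝ (B '' ↑(univ.erase i))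

theorem mem_lattice_self (B : Fin n → Euc n) (j : Fin n) : B j ∈ lattice B :=
  ⟨Pi.single j 1, by simp [Pi.single_apply, ite_smul]⟩

theorem sum_erase_mem_subLattice (B : Fin n → Euc n) (i : Fin n) (z : Fin n → ℤ) :
    ∑ k ∈ univ.erase i, (z k : ℝ) • B k ∈ subLattice B i := by
  refine ⟨Function.update z i 0, Function.update_self .., ?_⟩
  rw [← sum_erase_add _ _ (mem_univ i), Function.update_self, Int.cast_zero, zero_smul, add_zero]
  exact sum_congr rfl fun k hk => by rw [Function.update_of_ne (ne_of_mem_erase hk)]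

theorem SRCVPReduced.norm_starProjection_sq_le (hred : SRCVPReduced B) (i : Fin n) :
    ‖(otherSpan B i).starProjection (B i)‖ ^ 2 ≤ (∑ k ∈ univ.erase i, ‖B k‖ ^ 2) / 4 := by
  set K := otherSpan B i
  obtain ⟨z, hz⟩ := exists_norm_sub_sum_int_smul_sq_le B (univ.erase i)
    (K.starProjection_apply_mem (B i))
  set s := ∑ k ∈ univ.erase i, (z k : ℝ) • B k
  have hsK : s ∈ K :=
    K.sum_mem fun k hk => K.smul_mem _ (Submodule.subset_span (Set.mem_image_of_mem B hk))
  have hshort : ‖B i‖ ^ 2 ≤ ‖B i - s‖ ^ 2 := by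
    gcongr
    exact hred i s (sum_erase_mem_subLattice B i z)
  rw [K.norm_sub_sq_eq_of_mem _ hsK, K.norm_sq_eq_add_norm_sq_starProjection] at hshort
  linarith

theorem starProjection_orthogonal_otherSpan_sum (i : Fin n) (a : Fin n → ℝ) :
    (otherSpan B i)ᗮ.starProjection (∑ j, a j • B j) =
      a i • (otherSpan B i)ᗮ.starProjection (B i) := by
  rw [map_sum, sum_eq_single i (fun j _ hj => ?_) (by simp)]
  · rw [map_smul]
  · rw [map_smul, (otherSpan B i).starProjection_orthogonal_apply_eq_zero
      (Submodule.subset_span (Set.mem_image_of_mem B (mem_erase.mpr ⟨hj, mem_univ j⟩))),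
      smul_zero]

theorem norm_starProjection_orthogonal_le_of_mem_lattice {v : Euc n} (hv : v ∈ lattice B)
    {i : Fin n} (hvi : v ∉ otherSpan B i) :
    ‖(otherSpan B i)ᗮ.starProjection (B i)‖ ≤ ‖v‖ := by
  set K := otherSpan B i
  obtain ⟨c, rfl⟩ := hv
  have hQ := starProjection_orthogonal_otherSpan_sum (B := B) i (fun j => (c j : ℝ))
  have hci : c i ≠ 0 := by
    rintro hci
    rw [hci, Int.cast_zero, zero_smul, K.starProjection_orthogonal_val, sub_eq_zero] at hQ
    exact hvi (K.starProjection_eq_self_iff.mp hQ.symm)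
  calc ‖Kᗮ.starProjection (B i)‖ ≤ |(c i : ℝ)| * ‖Kᗮ.starProjection (B i)‖ :=
        le_mul_of_one_le_left (norm_nonneg _) (by exact_mod_cast Int.one_le_abs hci)
    _ = ‖Kᗮ.starProjection (∑ j, (c j : ℝ) • B j)‖ := by rw [hQ, norm_smul, Real.norm_eq_abs]
    _ ≤ _ := Kᗮ.norm_starProjection_apply_le _

theorem exists_notMem_otherSpan (i : Fin n) {v : Fin n → Euc n} (hv : LinearIndependent ℝ v) :
    ∃ j, v j ∉ otherSpan B i := by
  by_contra! hvK
  have hle : Submodule.span ℝ (Set.range v) ≤ otherSpan B i :=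
    Submodule.span_le.mpr (Set.range_subset_iff.mpr hvK)
  have hrank := Submodule.finrank_mono hle
  rw [finrank_span_eq_card hv, Fintype.card_fin, otherSpan, ← coe_image] at hrank
  have hcard :=
    (finrank_span_finset_le_card (R := ℝ) ((univ.erase i).image B)).trans card_image_le
  rw [card_erase_of_mem (mem_univ i), card_univ, Fintype.card_fin] at hcard
  have := hrank.trans hcard
  have := i.pos
  omega

theorem norm_starProjection_orthogonal_le_succMin (hB : LinearIndependent ℝ B) (i : Fin n) :
    ‖(otherSpan B i)ᗮ.starProjection (B i)‖ ≤ succMin B n := by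
  refine le_csInf ⟨∑ k, ‖B k‖, B, mem_lattice_self B, hB,
    fun j => single_le_sum (fun k _ => norm_nonneg (B k)) (mem_univ j)⟩ ?_
  rintro r ⟨v, hvL, hvli, hvr⟩
  obtain ⟨j, hj⟩ := exists_notMem_otherSpan i hvli
  exact (norm_starProjection_orthogonal_le_of_mem_lattice (hvL j) hj).trans (hvr j)

theorem norm_le_sqrt_mul_succMin (hn4 : n ≤ 4) (hB : LinearIndependent ℝ B)
    (hred : SRCVPReduced B) (i : Fin n) :
    ‖B i‖ ≤ √(4 / (5 - n)) * succMin B n := by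
  obtain ⟨i₀, -, hi₀⟩ := exists_max_image univ (fun k => ‖B k‖) ⟨i, mem_univ i⟩
  set M := ‖B i₀‖
  set K := otherSpan B i₀
  have h5n : (0 : ℝ) < 5 - n := sub_pos.mpr (by exact_mod_cast Nat.lt_succ_of_le hn4)
  have hsum : ∑ k ∈ univ.erase i₀, ‖B k‖ ^ 2 ≤ (n - 1) * M ^ 2 := by
    refine (sum_le_card_nsmul _ _ _ fun k _ =>
      pow_le_pow_left₀ (norm_nonneg _) (hi₀ k (mem_univ k)) 2).trans_eq ?_
    rw [card_erase_of_mem (mem_univ _), card_univ, Fintype.card_fin, nsmul_eq_mul,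
      Nat.cast_pred i.pos]
  have hP := hred.norm_starProjection_sq_le i₀
  have hQ := norm_starProjection_orthogonal_le_succMin hB i₀
  have hM := K.norm_sq_eq_add_norm_sq_starProjection (B i₀)
  have hmin : 0 ≤ succMin B n := (norm_nonneg _).trans hQ
  have hQ2 := pow_le_pow_left₀ (norm_nonneg _) hQ 2
  have hMmin : M ^ 2 ≤ 4 / (5 - n) * succMin B n ^ 2 := by
    rw [div_mul_eq_mul_div, le_div_iff₀ h5n]
    linarith
  calc ‖B i‖ ≤ M := hi₀ i (mem_univ i)
    _ ≤ √(4 / (5 - n) * succMin B n ^ 2) := Real.le_sqrt_of_sq_le hMmin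
    _ = √(4 / (5 - n)) * succMin B n := by
      rw [Real.sqrt_mul (by positivity), Real.sqrt_sq hmin]

end Lattice

theorem srcvp_prod_norm_bound_general {n : ℕ} (hn4 : n ≤ 4)
    (B : Fin n → Euc n) (hB : LinearIndependent ℝ B)
    (hred : SRCVPReduced B) :
    ∏ i, ‖B i‖ ≤ (4 / ((5 : ℝ) - n)) ^ ((n : ℝ) / 2) * succMin B n ^ n := by
  have h5n : (0 : ℝ) ≤ 4 / (5 - n) :=
    div_nonneg zero_le_four (sub_nonneg.mpr (by exact_mod_cast hn4.trans (by norm_num)))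
  calc ∏ i, ‖B i‖ ≤ ∏ _i : Fin n, √(4 / (5 - n)) * succMin B n :=
        prod_le_prod (fun i _ => norm_nonneg _) fun i _ => norm_le_sqrt_mul_succMin hn4 hB hred i
    _ = _ := by
      rw [prod_const, card_univ, Fintype.card_fin, mul_pow, Real.rpow_div_two_eq_sqrt _ h5n,
        Real.rpow_natCast]

theorem srcvp_prod_norm_bound {n : ℕ} (hn : 1 ≤ n) (hn4 : n ≤ 4)
    (B : Fin n → Euc n) (hB : LinearIndependent ℝ B)
    (hred : SRCVPReduced B) :
    ∏ i, ‖B i‖ ≤ (4 / ((5 : ℝ) - n)) ^ ((n : ℝ) / 2) * succMin B n ^ n :=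
  srcvp_prod_norm_bound_general hn4 B hB hred
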